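/- Let 0 < q < 1, μ > 0, and λ ∈ ℂ with q^{2λ} ≠ 1 and (q^{2λ+2};q²)_k ≠ 0 ≠ (q^{−2λ+2};q²)_k for all k ≥ 0. For the Hahn–Exton modified q²-Bessel function (type j = 3, δ = 1) the q-Wronskian is constant: for every x > 0, W^{(3)}(x) := I_{λ}^{(3)}(2μ(1−q²)q^{−1/2}x;q²) · I_{−λ}^{(3)}(2μ(1−q²)q^{1/2}x;q²) − I_{−λ}^{(3)}(2μ(1−q²)q^{−1/2}x;q²) · I_{λ}^{(3)}(2μ(1−q²)q^{1/2}x;q²) = q^{−λ}(1 − q^{2λ}) / (Γ_{q²}(λ+1) Γ_{q²}(1−λ)). Consequently I_{λ}^{(3)} and I_{−λ}^{(3)} form a fundamental system of solutions of the q-difference equation ℱ(q^{−1}x) − (q^{λ}+q^{−λ})ℱ(x) + ℱ(qx) − μ²q^{−2}(1−q²)²x²ℱ(x) = 0. -/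
import Mathlib


/-- The finite q-Pochhammer symbol `(a;Q)_n = ∏_{j<n} (1 − a Q^j)`. -/
noncomputable def qPoch (Q a : ℂ) (n : ℕ) : ℂ :=
  ∏ j ∈ Finset.range n, (1 - a * Q ^ j)

/-- The infinite q-Pochhammer symbol `(a;Q)_∞ = ∏_{j≥0} (1 − a Q^j)`. -/
noncomputable def qPochInf (Q a : ℂ) : ℂ :=
  ∏' j : ℕ, (1 - a * Q ^ j)

/-- `q^w = exp(w ln q)` for real `q > 0` and complex `w`. -/
noncomputable def qpow (q : ℝ) (w : ℂ) : ℂ := Complex.exp (w * (Real.log q : ℂ))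

/-- The q²-Gamma function `Γ_{q²}(x) = (q²;q²)_∞(1−q²)^{1−x}/(q^{2x};q²)_∞`. -/
noncomputable def qGamma2 (q : ℝ) (x : ℂ) : ℂ :=
  qPochInf ((q : ℂ) ^ 2) ((q : ℂ) ^ 2)
    * Complex.exp ((1 - x) * (Real.log (1 - q ^ 2) : ℂ))
    / qPochInf ((q : ℂ) ^ 2) (qpow q (2 * x))

/-- The modified q²-Bessel function `I_λ^{(j)}(w;q²)` of type `j`, where
`j = 2, 3, 1` corresponds to `δ = 0, 1, 2`:
`I_λ^{(j)}(w;q²) = (q^{−δλ/2}/Γ_{q²}(λ+1)) ∑_k q^{(2−δ)k(k+λ)−kδ}(1−q²)^{2k}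
t^{λ+2k}/((q²;q²)_k (q^{2λ+2};q²)_k)` with `t = q^{δ/2}w/(2(1−q²))`. -/
noncomputable def qBesselI (q : ℝ) (δ : ℕ) (lam : ℂ) (w : ℝ) : ℂ :=
  qpow q (-((δ : ℂ) * lam / 2)) / qGamma2 q (lam + 1) *
    ∑' k : ℕ,
      qpow q ((2 - (δ : ℂ)) * k * (k + lam) - k * (δ : ℂ)) * (1 - (q : ℂ) ^ 2) ^ (2 * k)
        * Complex.exp ((lam + 2 * (k : ℂ)) *
            (Real.log (q ^ ((δ : ℝ) / 2) * w / (2 * (1 - q ^ 2))) : ℂ))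
        / (qPoch ((q : ℂ) ^ 2) ((q : ℂ) ^ 2) k * qPoch ((q : ℂ) ^ 2) (qpow q (2 * lam + 2)) k)

open Complex Filter Finset

lemma qpow_add (q : ℝ) (a b : ℂ) : qpow q (a + b) = qpow q a * qpow q b := by
  simp [qpow, add_mul, Complex.exp_add]

lemma qpow_zero (q : ℝ) : qpow q 0 = 1 := by simp [qpow]

lemma qpow_ne_zero (q : ℝ) (a : ℂ) : qpow q a ≠ 0 := Complex.exp_ne_zero _

lemma qpow_neg (q : ℝ) (a : ℂ) : qpow q (-a) = (qpow q a)⁻¹ := by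
  simp [qpow, ← Complex.exp_neg]

lemma qpow_natCast {q : ℝ} (hq0 : 0 < q) (n : ℕ) : qpow q (n : ℂ) = (q : ℂ) ^ n := by
  rw [qpow, Complex.exp_nat_mul, ← Complex.ofReal_exp, Real.exp_log hq0]

lemma qpow_two {q : ℝ} (hq0 : 0 < q) : qpow q 2 = (q : ℂ) ^ 2 := by
  simpa using qpow_natCast hq0 2

lemma qpow_two_mul_nat {q : ℝ} (hq0 : 0 < q) (k : ℕ) :
    qpow q (2 * (k : ℂ)) = ((q : ℂ) ^ 2) ^ k := by
  rw [show (2 * (k : ℂ)) = ((2 * k : ℕ) : ℂ) by push_cast; ring, qpow_natCast hq0, pow_mul]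

lemma qPoch_succ (Q a : ℂ) (n : ℕ) : qPoch Q a (n + 1) = qPoch Q a n * (1 - a * Q ^ n) :=
  Finset.prod_range_succ _ _

lemma one_sub_q_pow_ne {q : ℝ} (hq0 : 0 < q) (hq1 : q < 1) (j : ℕ) :
    (1 : ℂ) - (q : ℂ) ^ 2 * ((q : ℂ) ^ 2) ^ j ≠ 0 := by
  have h : q ^ 2 * (q ^ 2) ^ j < 1 := by
    have h1 : q ^ 2 < 1 := by nlinarith
    have h2 : (q ^ 2) ^ j ≤ 1 := pow_le_one₀ (by positivity) h1.le
    nlinarith [pow_pos (pow_pos hq0 2) j]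
  have : ((1 - q ^ 2 * (q ^ 2) ^ j : ℝ) : ℂ) ≠ 0 := by
    simp only [ne_eq, Complex.ofReal_eq_zero]
    linarith
  simpa [Complex.ofReal_pow] using this

lemma qPochQ_ne_zero {q : ℝ} (hq0 : 0 < q) (hq1 : q < 1) (k : ℕ) :
    qPoch ((q : ℂ) ^ 2) ((q : ℂ) ^ 2) k ≠ 0 := by
  rw [qPoch, Finset.prod_ne_zero_iff]
  exact fun j _ => one_sub_q_pow_ne hq0 hq1 j

noncomputable def coA (q : ℝ) (lam : ℂ) (k : ℕ) : ℂ :=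
  qpow q ((k : ℂ) * ((k : ℂ) + lam) - (k : ℂ)) * (1 - (q : ℂ) ^ 2) ^ (2 * k) /
    (qPoch ((q : ℂ) ^ 2) ((q : ℂ) ^ 2) k * qPoch ((q : ℂ) ^ 2) (qpow q (2 * lam + 2)) k)

lemma coA_zero (q : ℝ) (lam : ℂ) : coA q lam 0 = 1 := by
  simp [coA, qPoch, qpow]

lemma qpow_two_lam_add_two {q : ℝ} (hq0 : 0 < q) (lam : ℂ) :
    qpow q (2 * lam + 2) = qpow q lam ^ 2 * (q : ℂ) ^ 2 := by
  rw [show (2 * lam + 2 : ℂ) = lam + lam + 2 by ring, qpow_add, qpow_add, qpow_two hq0]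
  ring

lemma one_sub_zeta_ne {q : ℝ} (lam : ℂ)
    (hp : ∀ k : ℕ, qPoch ((q : ℂ) ^ 2) (qpow q (2 * lam + 2)) k ≠ 0) (k : ℕ) :
    (1 : ℂ) - qpow q (2 * lam + 2) * ((q : ℂ) ^ 2) ^ k ≠ 0 := by
  have h := hp (k + 1)
  rw [qPoch_succ] at h
  exact fun h0 => h (by rw [h0, mul_zero])

lemma coA_ne_zero {q : ℝ} (hq0 : 0 < q) (hq1 : q < 1) (lam : ℂ)
    (hp : ∀ k : ℕ, qPoch ((q : ℂ) ^ 2) (qpow q (2 * lam + 2)) k ≠ 0) (k : ℕ) :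
    coA q lam k ≠ 0 := by
  apply div_ne_zero (mul_ne_zero (qpow_ne_zero _ _) (pow_ne_zero _ ?_))
    (mul_ne_zero (qPochQ_ne_zero hq0 hq1 k) (hp k))
  have : ((1 - q ^ 2 : ℝ) : ℂ) ≠ 0 := by
    simp only [ne_eq, Complex.ofReal_eq_zero]; nlinarith
  simpa using this

lemma coA_succ {q : ℝ} (hq0 : 0 < q) (hq1 : q < 1) (lam : ℂ)
    (hp : ∀ k : ℕ, qPoch ((q : ℂ) ^ 2) (qpow q (2 * lam + 2)) k ≠ 0) (k : ℕ) :
    coA q lam (k + 1) * ((1 - (q : ℂ) ^ 2 * ((q : ℂ) ^ 2) ^ k)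
        * (1 - qpow q lam ^ 2 * (q : ℂ) ^ 2 * ((q : ℂ) ^ 2) ^ k))
      = coA q lam k * (qpow q lam * ((q : ℂ) ^ 2) ^ k) * (1 - (q : ℂ) ^ 2) ^ 2 := by
  have hnum : qpow q (((k + 1 : ℕ) : ℂ) * (((k + 1 : ℕ) : ℂ) + lam) - ((k + 1 : ℕ) : ℂ))
      = qpow q ((k : ℂ) * ((k : ℂ) + lam) - (k : ℂ)) * (qpow q lam * ((q : ℂ) ^ 2) ^ k) := by
    rw [show (((k + 1 : ℕ) : ℂ) * (((k + 1 : ℕ) : ℂ) + lam) - ((k + 1 : ℕ) : ℂ))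
        = ((k : ℂ) * ((k : ℂ) + lam) - (k : ℂ)) + (lam + 2 * (k : ℂ)) by push_cast; ring,
      qpow_add, qpow_add, qpow_two_mul_nat hq0]
  have hpow : (1 - (q : ℂ) ^ 2) ^ (2 * (k + 1)) = (1 - (q : ℂ) ^ 2) ^ (2 * k) * (1 - (q : ℂ) ^ 2) ^ 2 := by
    rw [show 2 * (k + 1) = 2 * k + 2 by ring, pow_add]
  have hz2 := qpow_two_lam_add_two hq0 lam
  have hD1 := qPochQ_ne_zero hq0 hq1 k
  have hD2 := hp k
  have hf1 := one_sub_q_pow_ne hq0 hq1 k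
  have hf2 := one_sub_zeta_ne lam hp k
  rw [coA, coA, qPoch_succ, qPoch_succ, hnum, hpow]
  rw [hz2] at hf2 ⊢
  rw [hz2] at hD2
  rw [div_mul_eq_mul_div, div_mul_eq_mul_div, div_mul_eq_mul_div,
    div_eq_div_iff (mul_ne_zero (mul_ne_zero hD1 hf1) (mul_ne_zero hD2 hf2))
      (mul_ne_zero hD1 hD2)]
  ring

/-- Shifted coefficient sequence `coAQ k = coA (k-1) * Q^(k-1)`, with `coAQ 0 = 0`. -/
noncomputable def coAQ (q : ℝ) (lam : ℂ) : ℕ → ℂ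
  | 0 => 0
  | k + 1 => coA q lam k * ((q : ℂ) ^ 2) ^ k

lemma rec1y {q : ℝ} (hq0 : 0 < q) (hq1 : q < 1) (lam : ℂ)
    (hp : ∀ k : ℕ, qPoch ((q : ℂ) ^ 2) (qpow q (2 * lam + 2)) k ≠ 0) (k : ℕ) :
    coA q lam k * qpow q (-lam)
      = coA q lam k * (qpow q lam + qpow q (-lam) - qpow q lam * ((q : ℂ) ^ 2) ^ k)
          * ((q : ℂ) ^ 2) ^ k
        + (1 - (q : ℂ) ^ 2) ^ 2 * coAQ q lam k := by
  have hzy : qpow q lam * qpow q (-lam) = 1 := by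
    rw [← qpow_add]; simp [qpow]
  cases k with
  | zero => simp only [coAQ, pow_zero, mul_one, mul_zero, add_zero]; ring
  | succ k =>
    have hs := coA_succ hq0 hq1 lam hp k
    show _ = _ + _ * (coA q lam k * ((q : ℂ) ^ 2) ^ k)
    linear_combination qpow q (-lam) * hs +
      (coA q lam (k + 1) * qpow q lam * ((q : ℂ) ^ 2) ^ (k + 1)
        - coA q lam (k + 1) * qpow q lam * (((q : ℂ) ^ 2) ^ (k + 1)) ^ 2
        + (1 - (q : ℂ) ^ 2) ^ 2 * coA q lam k * ((q : ℂ) ^ 2) ^ k) * hzy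

lemma Qpow_ne_one {q : ℝ} (hq0 : 0 < q) (hq1 : q < 1) {n : ℕ} (hn : n ≠ 0) :
    ((q : ℂ) ^ 2) ^ n ≠ 1 := by
  intro h
  have h' : (((q ^ 2) ^ n : ℝ) : ℂ) = ((1 : ℝ) : ℂ) := by push_cast; simpa using h
  have := Complex.ofReal_inj.mp h'
  have hlt : (q ^ 2) ^ n < 1 := by
    apply pow_lt_one₀ (by positivity) (by nlinarith)
    exact hn
  linarith

lemma coeff_zero {q : ℝ} (hq0 : 0 < q) (hq1 : q < 1) (lam : ℂ)
    (hp1 : ∀ k : ℕ, qPoch ((q : ℂ) ^ 2) (qpow q (2 * lam + 2)) k ≠ 0)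
    (hp2 : ∀ k : ℕ, qPoch ((q : ℂ) ^ 2) (qpow q (2 * (-lam) + 2)) k ≠ 0)
    {n : ℕ} (hn : n ≠ 0) :
    ∑ k ∈ Finset.range (n + 1), coA q lam k * coA q (-lam) (n - k) *
      (qpow q (-lam) * ((q : ℂ) ^ 2) ^ (n - k) - qpow q lam * ((q : ℂ) ^ 2) ^ k) = 0 := by
  set Q : ℂ := (q : ℂ) ^ 2 with hQdef
  set z : ℂ := qpow q lam with hzdef
  set y : ℂ := qpow q (-lam) with hydef
  set S := ∑ k ∈ Finset.range (n + 1), coA q lam k * coA q (-lam) (n - k) *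
      (y * Q ^ (n - k) - z * Q ^ k) with hSdef
  have hterm : ∀ k ∈ Finset.range (n + 1),
      coA q lam k * coA q (-lam) (n - k) * (y * Q ^ (n - k) - z * Q ^ k)
        = Q ^ n * (coA q lam k * coA q (-lam) (n - k) * (y * Q ^ (n - k) - z * Q ^ k))
          + (1 - Q) ^ 2 * (coAQ q lam k * (coA q (-lam) (n - k) * Q ^ (n - k))
              - coA q lam k * Q ^ k * coAQ q (-lam) (n - k)) := by
    intro k hk
    have hk' : k ≤ n := by simpa [Nat.lt_succ_iff] using hk
    have hr1 := rec1y hq0 hq1 lam hp1 k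
    have hr2 := rec1y hq0 hq1 (-lam) hp2 (n - k)
    rw [neg_neg] at hr2
    have hQn : Q ^ k * Q ^ (n - k) = Q ^ n := by
      rw [← pow_add]; congr 1; omega
    linear_combination (coA q (-lam) (n - k) * Q ^ (n - k)) * hr1
      - (coA q lam k * Q ^ k) * hr2
      + (coA q lam k * coA q (-lam) (n - k) * (y * Q ^ (n - k) - z * Q ^ k)) * hQn
  have hsum : S = Q ^ n * S + (1 - Q) ^ 2 *
      ((∑ k ∈ Finset.range (n + 1), coAQ q lam k * (coA q (-lam) (n - k) * Q ^ (n - k)))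
        - ∑ k ∈ Finset.range (n + 1), coA q lam k * Q ^ k * coAQ q (-lam) (n - k)) := by
    calc S = ∑ k ∈ Finset.range (n + 1),
        (Q ^ n * (coA q lam k * coA q (-lam) (n - k) * (y * Q ^ (n - k) - z * Q ^ k))
          + (1 - Q) ^ 2 * (coAQ q lam k * (coA q (-lam) (n - k) * Q ^ (n - k))
              - coA q lam k * Q ^ k * coAQ q (-lam) (n - k))) :=
        Finset.sum_congr rfl hterm
      _ = _ := by
        rw [Finset.sum_add_distrib, ← Finset.mul_sum, ← Finset.mul_sum,
          Finset.sum_sub_distrib]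
  have hT : (∑ k ∈ Finset.range (n + 1), coAQ q lam k * (coA q (-lam) (n - k) * Q ^ (n - k)))
      = ∑ k ∈ Finset.range (n + 1), coA q lam k * Q ^ k * coAQ q (-lam) (n - k) := by
    rw [Finset.sum_range_succ' (fun k => coAQ q lam k * (coA q (-lam) (n - k) * Q ^ (n - k))) n,
      Finset.sum_range_succ (fun k => coA q lam k * Q ^ k * coAQ q (-lam) (n - k)) n]
    simp only [coAQ, zero_mul, mul_zero, add_zero, Nat.sub_self]
    apply Finset.sum_congr rfl
    intro i hi
    have hi' : i < n := Finset.mem_range.mp hi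
    have h1 : n - (i + 1) = n - 1 - i := by omega
    have h2 : n - i = (n - 1 - i) + 1 := by omega
    rw [h1, h2]
  rw [hT, sub_self, mul_zero, add_zero] at hsum
  have : (1 - Q ^ n) * S = 0 := by linear_combination hsum
  rcases mul_eq_zero.mp this with h | h
  · exact absurd (by linear_combination -h) (Qpow_ne_one hq0 hq1 hn)
  · exact h

lemma summable_norm_coA {q : ℝ} (hq0 : 0 < q) (hq1 : q < 1) (lam : ℂ)
    (hp : ∀ k : ℕ, qPoch ((q : ℂ) ^ 2) (qpow q (2 * lam + 2)) k ≠ 0)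
    (v : ℂ) (hv : v ≠ 0) :
    Summable fun k => ‖coA q lam k * v ^ k‖ := by
  set Q : ℂ := (q : ℂ) ^ 2 with hQdef
  have hQ : Q ≠ 0 := pow_ne_zero _ (Complex.ofReal_ne_zero.mpr hq0.ne')
  have hQnorm : ‖Q‖ < 1 := by
    rw [hQdef, norm_pow, Complex.norm_real, Real.norm_of_nonneg hq0.le]
    nlinarith
  set z : ℂ := qpow q lam with hzdef
  have hz : z ≠ 0 := qpow_ne_zero _ _
  set f : ℕ → ℂ := fun k => coA q lam k * v ^ k with hfdef
  have hf0 : ∀ k, f k ≠ 0 := fun k =>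
    mul_ne_zero (coA_ne_zero hq0 hq1 lam hp k) (pow_ne_zero _ hv)
  -- ratio of consecutive terms
  have hratio : ∀ k : ℕ, ‖f (k + 1)‖ / ‖f k‖
      = ‖(z * (1 - Q) ^ 2 * v) * Q ^ k / ((1 - Q * Q ^ k) * (1 - z ^ 2 * Q * Q ^ k))‖ := by
    intro k
    rw [← norm_div]
    congr 1
    have hf1 := one_sub_q_pow_ne hq0 hq1 k
    have hf2 : (1 : ℂ) - z ^ 2 * Q * Q ^ k ≠ 0 := by
      have := one_sub_zeta_ne lam hp k
      rwa [qpow_two_lam_add_two hq0 lam] at this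
    have hs := coA_succ hq0 hq1 lam hp k
    rw [div_eq_div_iff (hf0 k) (mul_ne_zero hf1 hf2)]
    have : f (k + 1) = coA q lam (k + 1) * v ^ k * v := by
      simp only [hfdef, pow_succ]; ring
    rw [this]
    show coA q lam (k + 1) * v ^ k * v * ((1 - Q * Q ^ k) * (1 - z ^ 2 * Q * Q ^ k))
      = z * (1 - Q) ^ 2 * v * Q ^ k * (coA q lam k * v ^ k)
    linear_combination (v ^ k * v) * hs
  -- the ratio tends to zero
  have htend : Filter.Tendsto (fun k => ‖f (k + 1)‖ / ‖f k‖) Filter.atTop (nhds 0) := by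
    simp only [hratio]
    have h1 : Filter.Tendsto (fun k : ℕ => (z * (1 - Q) ^ 2 * v) * Q ^ k)
        Filter.atTop (nhds 0) := by
      simpa using (tendsto_pow_atTop_nhds_zero_of_norm_lt_one hQnorm).const_mul
        (z * (1 - Q) ^ 2 * v)
    have h2 : Filter.Tendsto (fun k : ℕ => (1 - Q * Q ^ k) * (1 - z ^ 2 * Q * Q ^ k))
        Filter.atTop (nhds 1) := by
      have hq' : Filter.Tendsto (fun k : ℕ => Q ^ k) Filter.atTop (nhds 0) :=
        tendsto_pow_atTop_nhds_zero_of_norm_lt_one hQnorm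
      have e1 : Filter.Tendsto (fun k : ℕ => 1 - Q * Q ^ k) Filter.atTop (nhds 1) := by
        simpa using tendsto_const_nhds.sub (hq'.const_mul Q)
      have e2 : Filter.Tendsto (fun k : ℕ => 1 - z ^ 2 * Q * Q ^ k) Filter.atTop (nhds 1) := by
        simpa using tendsto_const_nhds.sub (hq'.const_mul (z ^ 2 * Q))
      simpa using e1.mul e2
    have := (h1.div h2 one_ne_zero).norm
    simpa using this
  have hgoal := summable_of_ratio_test_tendsto_lt_one (f := fun k => ‖f k‖) one_pos
    (Filter.Eventually.of_forall fun k => by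
      simpa [norm_ne_zero_iff] using hf0 k) ?_
  · exact hgoal
  · refine htend.congr fun k => ?_
    rw [Real.norm_of_nonneg (norm_nonneg _), Real.norm_of_nonneg (norm_nonneg _)]

lemma bessel1_eq {q : ℝ} (hq0 : 0 < q) (lam : ℂ) (w t : ℝ) (ht : 0 < t)
    (harg : q ^ (((1 : ℕ) : ℝ) / 2) * w / (2 * (1 - q ^ 2)) = t) :
    qBesselI q 1 lam w = qpow q (-(lam / 2)) / qGamma2 q (lam + 1) *
      (Complex.exp (lam * (Real.log t : ℂ)) * ∑' k : ℕ, coA q lam k * ((t : ℂ) ^ 2) ^ k) := by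
  rw [qBesselI, harg]
  rw [show (-(((1 : ℕ) : ℂ) * lam / 2)) = -(lam / 2) by push_cast; ring]
  rw [mul_comm (Complex.exp (lam * (Real.log t : ℂ)))
    (∑' k : ℕ, coA q lam k * ((t : ℂ) ^ 2) ^ k), ← tsum_mul_right]
  congr 1
  refine tsum_congr fun k => ?_
  rw [show ((2 - ((1 : ℕ) : ℂ)) * k * (k + lam) - k * ((1 : ℕ) : ℂ))
      = ((k : ℂ) * ((k : ℂ) + lam) - (k : ℂ)) by push_cast; ring]
  have hexp2 : Complex.exp (2 * (Real.log t : ℂ)) = (t : ℂ) ^ 2 := by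
    rw [show (2 : ℂ) * (Real.log t : ℂ) = ((2 : ℕ) : ℂ) * (Real.log t : ℂ) by norm_num,
      Complex.exp_nat_mul, ← Complex.ofReal_exp, Real.exp_log ht]
  have hexp : Complex.exp ((lam + 2 * (k : ℂ)) * (Real.log t : ℂ))
      = Complex.exp (lam * (Real.log t : ℂ)) * ((t : ℂ) ^ 2) ^ k := by
    rw [show (lam + 2 * (k : ℂ)) * (Real.log t : ℂ)
        = lam * (Real.log t : ℂ) + (k : ℕ) * (2 * (Real.log t : ℂ)) by push_cast; ring,
      Complex.exp_add, Complex.exp_nat_mul, hexp2]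
  rw [hexp, coA]
  ring

/-- The q-Wronskian of the Hahn–Exton modified q²-Bessel functions (type `j = 3`,
`δ = 1`) is constant:
`I_λ^{(3)}(2μ(1−q²)q^{−1/2}x;q²) I_{−λ}^{(3)}(2μ(1−q²)q^{1/2}x;q²)
 − I_{−λ}^{(3)}(2μ(1−q²)q^{−1/2}x;q²) I_λ^{(3)}(2μ(1−q²)q^{1/2}x;q²)
 = q^{−λ}(1 − q^{2λ})/(Γ_{q²}(λ+1)Γ_{q²}(1−λ))` for every `x > 0`. -/
theorem qWronskian_HahnExton (q : ℝ) (hq0 : 0 < q) (hq1 : q < 1)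
    (μ x : ℝ) (hμ : 0 < μ) (hx : 0 < x) (lam : ℂ)
    (hlam : qpow q (2 * lam) ≠ 1)
    (hp1 : ∀ k : ℕ, qPoch ((q : ℂ) ^ 2) (qpow q (2 * lam + 2)) k ≠ 0)
    (hp2 : ∀ k : ℕ, qPoch ((q : ℂ) ^ 2) (qpow q (-(2 * lam) + 2)) k ≠ 0) :
    qBesselI q 1 lam (2 * μ * (1 - q ^ 2) * q ^ (-(1 : ℝ) / 2) * x)
        * qBesselI q 1 (-lam) (2 * μ * (1 - q ^ 2) * q ^ ((1 : ℝ) / 2) * x)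
      - qBesselI q 1 (-lam) (2 * μ * (1 - q ^ 2) * q ^ (-(1 : ℝ) / 2) * x)
        * qBesselI q 1 lam (2 * μ * (1 - q ^ 2) * q ^ ((1 : ℝ) / 2) * x)
    = qpow q (-lam) * (1 - qpow q (2 * lam))
        / (qGamma2 q (lam + 1) * qGamma2 q (1 - lam)) := by
  have h1q2 : (0 : ℝ) < 1 - q ^ 2 := by nlinarith
  set u : ℝ := μ * x with hudef
  have hu : 0 < u := mul_pos hμ hx
  have hqu : 0 < q * u := mul_pos hq0 hu
  have hp2' : ∀ k : ℕ, qPoch ((q : ℂ) ^ 2) (qpow q (2 * (-lam) + 2)) k ≠ 0 := by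
    intro k
    rw [show (2 * (-lam) + 2 : ℂ) = -(2 * lam) + 2 by ring]
    exact hp2 k
  have hhalf : q ^ ((1 : ℝ) / 2) * q ^ (-(1 : ℝ) / 2) = 1 := by
    rw [← Real.rpow_add hq0]; norm_num
  have hhalf2 : q ^ ((1 : ℝ) / 2) * q ^ ((1 : ℝ) / 2) = q := by
    rw [← Real.rpow_add hq0]; norm_num
  have harg1 : q ^ (((1 : ℕ) : ℝ) / 2) * (2 * μ * (1 - q ^ 2) * q ^ (-(1 : ℝ) / 2) * x)
      / (2 * (1 - q ^ 2)) = u := by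
    rw [show q ^ (((1 : ℕ) : ℝ) / 2) * (2 * μ * (1 - q ^ 2) * q ^ (-(1 : ℝ) / 2) * x)
        = (q ^ ((1 : ℝ) / 2) * q ^ (-(1 : ℝ) / 2)) * (2 * μ * (1 - q ^ 2) * x) by
      push_cast; ring, hhalf]
    field_simp [hudef]
    ring
  have harg2 : q ^ (((1 : ℕ) : ℝ) / 2) * (2 * μ * (1 - q ^ 2) * q ^ ((1 : ℝ) / 2) * x)
      / (2 * (1 - q ^ 2)) = q * u := by
    rw [show q ^ (((1 : ℕ) : ℝ) / 2) * (2 * μ * (1 - q ^ 2) * q ^ ((1 : ℝ) / 2) * x)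
        = (q ^ ((1 : ℝ) / 2) * q ^ ((1 : ℝ) / 2)) * (2 * μ * (1 - q ^ 2) * x) by
      push_cast; ring, hhalf2]
    field_simp [hudef]
    ring
  rw [bessel1_eq hq0 lam _ u hu harg1, bessel1_eq hq0 (-lam) _ (q * u) hqu harg2,
    bessel1_eq hq0 (-lam) _ u hu harg1, bessel1_eq hq0 lam _ (q * u) hqu harg2]
  simp only [Real.log_mul hq0.ne' hu.ne', Complex.ofReal_add, Complex.ofReal_mul,
    show (-lam + 1 : ℂ) = 1 - lam by ring]
  rw [show ((q : ℂ) * (u : ℂ)) ^ 2 = (q : ℂ) ^ 2 * (u : ℂ) ^ 2 by ring]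
  set Q : ℂ := (q : ℂ) ^ 2 with hQdef
  set U : ℂ := (u : ℂ) ^ 2 with hUdef
  set L : ℂ := (Real.log q : ℂ) with hLdef
  set T : ℂ := (Real.log u : ℂ) with hTdef
  set Γ1 : ℂ := qGamma2 q (lam + 1) with hG1def
  set Γ2 : ℂ := qGamma2 q (1 - lam) with hG2def
  set S1 : ℂ := ∑' k : ℕ, coA q lam k * U ^ k with hS1def
  set S2 : ℂ := ∑' k : ℕ, coA q (-lam) k * (Q * U) ^ k with hS2def
  set S3 : ℂ := ∑' k : ℕ, coA q (-lam) k * U ^ k with hS3def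
  set S4 : ℂ := ∑' k : ℕ, coA q lam k * (Q * U) ^ k with hS4def
  have hUne : U ≠ 0 := pow_ne_zero _ (Complex.ofReal_ne_zero.mpr hu.ne')
  have hQne : Q ≠ 0 := pow_ne_zero _ (Complex.ofReal_ne_zero.mpr hq0.ne')
  have hQUne : Q * U ≠ 0 := mul_ne_zero hQne hUne
  have hc1 : qpow q (-(lam / 2)) * qpow q (-(-lam / 2))
      * (Complex.exp (lam * T) * Complex.exp (-lam * (L + T))) = qpow q (-lam) := by
    simp only [qpow, ← Complex.exp_add]
    congr 1
    ring
  have hc2 : qpow q (-(lam / 2)) * qpow q (-(-lam / 2))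
      * (Complex.exp (-lam * T) * Complex.exp (lam * (L + T))) = qpow q lam := by
    simp only [qpow, ← Complex.exp_add]
    congr 1
    ring
  have key : qpow q (-lam) * (S1 * S2) - qpow q lam * (S3 * S4)
      = qpow q (-lam) * (1 - qpow q (2 * lam)) := by
    have hsA_U := summable_norm_coA hq0 hq1 lam hp1 U hUne
    have hsA_QU := summable_norm_coA hq0 hq1 lam hp1 (Q * U) hQUne
    have hsB_U := summable_norm_coA hq0 hq1 (-lam) hp2' U hUne
    have hsB_QU := summable_norm_coA hq0 hq1 (-lam) hp2' (Q * U) hQUne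
    rw [hS1def, hS2def, hS3def, hS4def,
      tsum_mul_tsum_eq_tsum_sum_range_of_summable_norm hsA_U hsB_QU,
      tsum_mul_tsum_eq_tsum_sum_range_of_summable_norm hsB_U hsA_QU,
      ← tsum_mul_left, ← tsum_mul_left,
      ← Summable.tsum_sub
        (((summable_norm_sum_mul_range_of_summable_norm hsA_U hsB_QU).of_norm).mul_left _)
        (((summable_norm_sum_mul_range_of_summable_norm hsB_U hsA_QU).of_norm).mul_left _)]
    have hvanish : ∀ n : ℕ, n ≠ 0 →
        qpow q (-lam) * (∑ k ∈ Finset.range (n + 1),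
            (coA q lam k * U ^ k) * (coA q (-lam) (n - k) * (Q * U) ^ (n - k)))
          - qpow q lam * (∑ k ∈ Finset.range (n + 1),
            (coA q (-lam) k * U ^ k) * (coA q lam (n - k) * (Q * U) ^ (n - k))) = 0 := by
      intro n hn
      have hG : (∑ k ∈ Finset.range (n + 1),
            (coA q (-lam) k * U ^ k) * (coA q lam (n - k) * (Q * U) ^ (n - k)))
          = ∑ k ∈ Finset.range (n + 1),
            (coA q lam k * (Q * U) ^ k) * (coA q (-lam) (n - k) * U ^ (n - k)) := by
        rw [← Finset.sum_range_reflect]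
        refine Finset.sum_congr rfl fun j hj => ?_
        have hj' : j ≤ n := by simpa [Nat.lt_succ_iff] using hj
        rw [show n + 1 - 1 - j = n - j by omega, show n - (n - j) = j by omega]
        ring
      rw [hG, Finset.mul_sum, Finset.mul_sum, ← Finset.sum_sub_distrib]
      have hterm2 : ∀ k ∈ Finset.range (n + 1),
          qpow q (-lam) * ((coA q lam k * U ^ k) * (coA q (-lam) (n - k) * (Q * U) ^ (n - k)))
            - qpow q lam * ((coA q lam k * (Q * U) ^ k) * (coA q (-lam) (n - k) * U ^ (n - k)))
          = U ^ n * (coA q lam k * coA q (-lam) (n - k)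
              * (qpow q (-lam) * Q ^ (n - k) - qpow q lam * Q ^ k)) := by
        intro k hk
        have hk' : k ≤ n := by simpa [Nat.lt_succ_iff] using hk
        have hU : U ^ k * U ^ (n - k) = U ^ n := by
          rw [← pow_add]; congr 1; omega
        rw [mul_pow, mul_pow]
        linear_combination (coA q lam k * coA q (-lam) (n - k)
          * (qpow q (-lam) * Q ^ (n - k) - qpow q lam * Q ^ k)) * hU
      rw [Finset.sum_congr rfl hterm2, ← Finset.mul_sum,
        coeff_zero hq0 hq1 lam hp1 hp2' hn, mul_zero]
    rw [tsum_eq_single 0 hvanish]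
    simp [coA_zero]
    have hq2l : qpow q (-lam) * qpow q (2 * lam) = qpow q lam := by
      rw [← qpow_add]; congr 1; ring
    linear_combination hq2l
  calc qpow q (-(lam / 2)) / Γ1 * (Complex.exp (lam * T) * S1)
        * (qpow q (-(-lam / 2)) / Γ2 * (Complex.exp (-lam * (L + T)) * S2))
      - qpow q (-(-lam / 2)) / Γ2 * (Complex.exp (-lam * T) * S3)
        * (qpow q (-(lam / 2)) / Γ1 * (Complex.exp (lam * (L + T)) * S4))
      = ((qpow q (-(lam / 2)) * qpow q (-(-lam / 2))
            * (Complex.exp (lam * T) * Complex.exp (-lam * (L + T)))) * (S1 * S2)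
          - (qpow q (-(lam / 2)) * qpow q (-(-lam / 2))
            * (Complex.exp (-lam * T) * Complex.exp (lam * (L + T)))) * (S3 * S4))
        / (Γ1 * Γ2) := by ring
    _ = qpow q (-lam) * (1 - qpow q (2 * lam)) / (Γ1 * Γ2) := by rw [hc1, hc2, key]
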